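/- Let g be a positive integer, q = ⌈g²/2⌉ + g, and z = ⌈g²/2⌉. Define the q×q array P by: for j,k ∈ [1:q], P(j,k) = * if j ∈ {<k−z+1>_q, <k−z+2>_q, …, <k>_q}; otherwise j = <k+h>_q for a unique h ∈ [1:g], and P(j,k) = <j−(h−1)(g+2)>_q if 1 ≤ h ≤ ⌈g/2⌉, while P(j,k) = <k−(g−h)(g+2)>_q if ⌈g/2⌉ < h ≤ g. Then for every s ∈ [1:q] and all j,k ∈ [1:q] with P(j,k) = s, one has P(<s−1>_q, k) = *; consequently the map φ(s) = <s−1>_q assigns to each integer s ∈ [1:q] a star row for s, each row of P being assigned to exactly one integer, so P satisfies Condition 1 with parameter λ = 1. -/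

import Mathlib

/-- A `(K,F,Z,S)` placement delivery array: an `F × K` array whose entries are either `*`
(encoded as `none`) or integers in `[1:S]` (encoded as `some s` with `s : Fin S`). -/
def IsPDA (K F Z S : ℕ) (P : Fin F → Fin K → Option (Fin S)) : Prop :=
  (∀ k : Fin K, (Finset.univ.filter fun j : Fin F => P j k = none).card = Z) ∧
  (∀ s : Fin S, ∃ (j : Fin F) (k : Fin K), P j k = some s) ∧
  (∀ (j1 j2 : Fin F) (k1 k2 : Fin K) (s : Fin S),
      P j1 k1 = some s → P j2 k2 = some s → (j1, k1) ≠ (j2, k2) →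
      P j1 k2 = none ∧ P j2 k1 = none)

/-- A PDA is `g`-regular if each integer appears exactly `g` times. -/
def PDARegular (K F S g : ℕ) (P : Fin F → Fin K → Option (Fin S)) : Prop :=
  ∀ s : Fin S,
    (Finset.univ.filter fun jk : Fin F × Fin K => P jk.1 jk.2 = some s).card = g

/-- Row `i` is a star row for the integer `s`. -/
def PDAStarRow (K F S : ℕ) (P : Fin F → Fin K → Option (Fin S)) (i : Fin F) (s : Fin S) : Prop :=
  ∀ (j : Fin F) (k : Fin K), P j k = some s → P i k = none

/-- Condition 1 with parameter `lam`. -/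
def PDACondition1 (K F Z S lam : ℕ) (P : Fin F → Fin K → Option (Fin S)) : Prop :=
  lam ∣ F ∧ lam ∣ Z ∧
  (∀ (j : Fin F) (k : Fin K),
      P j k = none ↔
        P ⟨j.val % (F / lam), Nat.lt_of_le_of_lt (Nat.mod_le _ _) j.isLt⟩ k = none) ∧
  ∃ φ : Fin S → Fin (F / lam),
    (∀ s : Fin S, PDAStarRow K F S P (Fin.castLE (Nat.div_le_self F lam) (φ s)) s) ∧
    (∀ j : Fin (F / lam), (Finset.univ.filter fun s : Fin S => φ s = j).card * F = lam * S)

/-- Condition 2: every row contains the same number of stars. -/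
def PDACondition2 (K F S : ℕ) (P : Fin F → Fin K → Option (Fin S)) : Prop :=
  ∀ j1 j2 : Fin F,
    (Finset.univ.filter fun k : Fin K => P j1 k = none).card =
    (Finset.univ.filter fun k : Fin K => P j2 k = none).card

/-- `subMod a b q` computes `(a - b) mod q` (the 0-based residue), where the subtraction is
made safe in `ℕ` by first adding the multiple `q * b`. -/
def subMod (a b q : ℕ) : ℕ := (a + q * b - b) % q

/-! For a non-star entry `P(J,K) = s` put `h = (J - K) mod q`, so `1 ≤ h ≤ g`. In both branches
of the construction `K - (s - 1) ≡ t (mod q)` for an explicit `t`, namely `(h - 1)(g + 1)` when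
`h ≤ ⌈g/2⌉` and `(g - h)(g + 2) + 1` otherwise, and in both cases `t < ⌈g²/2⌉ = z`. Hence row
`s - 1` lies among the `z` star rows of column `K`. As `s ↦ s - 1` is a cyclic rotation, every row
is the chosen star row of exactly one integer, which is Condition 1 with `λ = 1`. -/

theorem add_sub_mod_add_add_sub_mod {a b q : ℕ} (ha : a < q) (hb : b < q) (hab : a ≠ b) :
    (a + q - b) % q + (b + q - a) % q = q := by
  rcases Nat.lt_or_gt_of_ne hab with h | h
  · rw [Nat.mod_eq_of_lt (by omega : a + q - b < q), show b + q - a = b - a + q by omega,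
      Nat.add_mod_right, Nat.mod_eq_of_lt (by omega)]
    omega
  · rw [Nat.mod_eq_of_lt (by omega : b + q - a < q), show a + q - b = a - b + q by omega,
      Nat.add_mod_right, Nat.mod_eq_of_lt (by omega)]
    omega

theorem natCast_add_sub (a : ℕ) {b q : ℕ} (hb : b ≤ q) : ((a + q - b : ℕ) : ZMod q) = a - b := by
  rw [Nat.add_sub_assoc hb, Nat.cast_add, Nat.cast_sub hb, ZMod.natCast_self]
  ring

theorem natCast_subMod (a b : ℕ) {q : ℕ} (hq : 0 < q) :
    ((subMod a b q : ℕ) : ZMod q) = a - b := by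
  rw [subMod, ZMod.natCast_mod, Nat.cast_sub (by nlinarith), Nat.cast_add, Nat.cast_mul,
    ZMod.natCast_self]
  ring

theorem mod_eq_of_natCast_eq {x t q : ℕ} (ht : t < q) (h : (x : ZMod q) = t) : x % q = t := by
  rwa [ZMod.natCast_eq_natCast_iff', Nat.mod_eq_of_lt ht] at h

theorem mul_add_one_lt_half_sq {g m : ℕ} (hm : 2 * m + 1 ≤ g) : m * (g + 1) < (g ^ 2 + 1) / 2 := by
  have : 2 * (m * (g + 1)) + 1 ≤ g ^ 2 := by nlinarith
  omega

theorem mul_add_two_add_one_lt_half_sq {g m : ℕ} (hm : 2 * m + 2 ≤ g) :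
    m * (g + 2) + 1 < (g ^ 2 + 1) / 2 := by
  have : 2 * (m * (g + 2) + 1) + 1 ≤ g ^ 2 := by nlinarith
  omega

theorem val_finRotate_symm {q : ℕ} (s : Fin q) :
    ((finRotate q).symm s).val = (s.val + q - 1) % q := by
  have := s.neZero
  rw [finRotate_symm_apply, Fin.val_sub, Fin.val_one']
  rcases Nat.lt_or_ge 1 q with hq | hq
  · rw [Nat.mod_eq_of_lt hq]
    congr 1
    omega
  · obtain rfl : q = 1 := by have := s.pos; omega
    simp

theorem Equiv.card_filter_apply_eq {α β : Type*} [Fintype α] [DecidableEq β] (e : α ≃ β) (b : β) :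
    (Finset.univ.filter fun a => e a = b).card = 1 :=
  Finset.card_eq_one.2 ⟨e.symm b, by ext; simp [Equiv.eq_symm_apply]⟩

theorem pdaCondition1_one_of_equiv {K Z q : ℕ} {P : Fin q → Fin K → Option (Fin q)}
    (e : Fin q ≃ Fin q) (he : ∀ s, PDAStarRow K q q P (e s) s) : PDACondition1 K q Z q 1 P := by
  refine ⟨one_dvd _, one_dvd _, fun j k => ?_, e.trans (finCongr (Nat.div_one q).symm), he,
    fun j => ?_⟩
  · simp [Nat.mod_eq_of_lt j.isLt]
  · rw [Equiv.card_filter_apply_eq, one_mul]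

def construction3 (g q z : ℕ) (J K : Fin q) : Option (Fin q) :=
  if (K.val + q - J.val) % q < z then none
  else if (J.val + q - K.val) % q ≤ (g + 1) / 2 then
    some ⟨subMod J.val (((J.val + q - K.val) % q - 1) * (g + 2)) q, Nat.mod_lt _ J.pos⟩
  else
    some ⟨subMod K.val ((g - (J.val + q - K.val) % q) * (g + 2)) q, Nat.mod_lt _ J.pos⟩

theorem construction3_offset_lt {g q z : ℕ} (hq : q = z + g) (hz : z = (g ^ 2 + 1) / 2)
    {J K s : Fin q} (hs : construction3 g q z J K = some s) :
    (K.val + q - (s.val + q - 1) % q) % q < z := by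
  have hq0 : 0 < q := J.pos
  have hz0 : 0 < z := by
    have := Nat.le_self_pow two_ne_zero g
    omega
  suffices ∃ t < z, (K.val - s.val + 1 : ZMod q) = t by
    obtain ⟨t, htz, ht⟩ := this
    have : (K.val + q - (s.val + q - 1) % q) % q = t := mod_eq_of_natCast_eq (by omega) (by
      rw [natCast_add_sub _ (Nat.mod_lt _ hq0).le, ZMod.natCast_mod, natCast_add_sub _ hq0, ← ht]
      push_cast; ring)
    omega
  have hJK : J.val ≠ K.val := by
    rintro h
    simp [construction3, h, hz0] at hs
  have hsum := add_sub_mod_add_add_sub_mod J.isLt K.isLt hJK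
  have hlt := Nat.mod_lt (K.val + q - J.val) hq0
  unfold construction3 at hs
  split_ifs at hs with hstar hlow
  · obtain ⟨m, hm⟩ : ∃ m, (J.val + q - K.val) % q = m + 1 := ⟨_, (Nat.succ_pred (by omega)).symm⟩
    have hsv : subMod J.val (m * (g + 2)) q = s.val := by
      simpa only [hm, Nat.add_sub_cancel] using congrArg Fin.val (Option.some_injective _ hs)
    have hJK' : ((m + 1 : ℕ) : ZMod q) = J.val - K.val := by
      rw [← hm, ZMod.natCast_mod, natCast_add_sub _ K.isLt.le]
    refine ⟨m * (g + 1), hz ▸ mul_add_one_lt_half_sq (by omega), ?_⟩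
    rw [← hsv, natCast_subMod _ _ hq0]
    push_cast at hJK' ⊢
    linear_combination hJK'
  · have hsv : subMod K.val ((g - (J.val + q - K.val) % q) * (g + 2)) q = s.val :=
      congrArg Fin.val (Option.some_injective _ hs)
    refine ⟨_, hz ▸ mul_add_two_add_one_lt_half_sq (m := g - (J.val + q - K.val) % q)
      (by omega), ?_⟩
    rw [← hsv, natCast_subMod _ _ hq0]
    push_cast
    ring

/-- Lemma 3, second part: for the array of Construction 3 (with
`q = ⌈g²/2⌉ + g`, `z = ⌈g²/2⌉`, encoded 0-based as in Statement 11), for every integer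
`s ∈ [1:q]` and all `j,k` with `P(j,k) = s` one has `P(<s-1>_q, k) = *`; in 0-based form the
row `<s-1>_q` becomes `(s₀ + q - 1) % q` for `s₀ = s - 1`. Consequently `P` satisfies
Condition 1 with parameter `λ = 1`. -/
theorem pda_construction3_cond1 (g c q z : ℕ) (hg : 0 < g)
    (hc : c = (g ^ 2 + 1) / 2) (hq : q = c + g) (hz : z = c)
    (P : Fin q → Fin q → Option (Fin q))
    (hP : ∀ J K : Fin q, P J K =
      if (K.val + q - J.val) % q < z then none
      else if (J.val + q - K.val) % q ≤ (g + 1) / 2 then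
        some ⟨subMod J.val (((J.val + q - K.val) % q - 1) * (g + 2)) q,
          by simp only [subMod]; exact Nat.mod_lt _ (by omega)⟩
      else
        some ⟨subMod K.val ((g - (J.val + q - K.val) % q) * (g + 2)) q,
          by simp only [subMod]; exact Nat.mod_lt _ (by omega)⟩) :
    (∀ (s : Fin q) (J K : Fin q), P J K = some s →
        P ⟨(s.val + q - 1) % q, Nat.mod_lt _ (by omega)⟩ K = none) ∧
    PDACondition1 q q z q 1 P := by
  obtain rfl : P = construction3 g q z := funext₂ hP
  have hpred : ∀ (s J K : Fin q), construction3 g q z J K = some s →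
      construction3 g q z ⟨(s.val + q - 1) % q, Nat.mod_lt _ J.pos⟩ K = none :=
    fun s J K hs => if_pos (construction3_offset_lt (by rw [hq, hz]) (by rw [hz, hc]) hs)
  refine ⟨hpred, pdaCondition1_one_of_equiv (finRotate q).symm fun s J K hs => ?_⟩
  rw [show (finRotate q).symm s = ⟨(s.val + q - 1) % q, Nat.mod_lt _ J.pos⟩ from
    Fin.ext (val_finRotate_symm s)]
  exact hpred s J K hs
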